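/- arXiv:2305.02924 — 12 statements merged into one kernel-verified Lean document; each statement's English description precedes it below -/
import Mathlib

section
/- Let S be a semigroup, z₀ ∈ S a fixed element, and f, g : S → ℂ solutions of g(xyz₀)=g(x)g(y)−f(x)f(y) for all x,y ∈ S, with f(z₀)=0. Then g(z₀²)·g(xy) = g(z₀)·[g(x)g(y) − f(x)f(y)] + f(z₀²)·f(xy) for all x,y ∈ S. -/
theorem stmt_1 {S : Type*} [Semigroup S] (z₀ : S) (f g : S → ℂ)
    (h : ∀ x y : S, g (x * y * z₀) = g x * g y - f x * f y)
    (hf : f z₀ = 0) :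
    ∀ x y : S, g (z₀ * z₀) * g (x * y) =
      g z₀ * (g x * g y - f x * f y) + f (z₀ * z₀) * f (x * y) := by
  intro x y
  have h1 := h (x * y) (z₀ * z₀)
  have h2 := h (x * y * z₀) z₀
  have ha : x * y * (z₀ * z₀) * z₀ = x * y * z₀ * z₀ * z₀ := by
    simp [mul_assoc]
  rw [ha] at h1
  rw [hf] at h2
  rw [← h x y]
  linear_combination h2 - h1
end

section
/- Let S be a semigroup, z₀ ∈ S, and f, g : S → ℂ satisfy g(xyz₀)=g(x)g(y)−f(x)f(y) for all x,y ∈ S, with f(z₀)=0. Then g(z₀²)² = g(z₀)³ + f(z₀²)². -/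
theorem stmt_2 {S : Type*} [Semigroup S] (z₀ : S) (f g : S → ℂ)
    (h : ∀ x y : S, g (x * y * z₀) = g x * g y - f x * f y)
    (hf : f z₀ = 0) :
    g (z₀ * z₀) ^ 2 = g z₀ ^ 3 + f (z₀ * z₀) ^ 2 := by
  have h1 := h z₀ z₀
  have h2 := h (z₀ * z₀) (z₀ * z₀)
  have h3 := h (z₀ * z₀ * z₀) z₀
  simp only [mul_assoc] at h1 h2 h3
  rw [hf] at h1 h3
  linear_combination h3 - h2 + g z₀ * h1
end

section
/- Let S be a semigroup, z₀ ∈ S, and f, g : S → ℂ satisfy g(xyz₀)=g(x)g(y)−f(x)f(y) for all x,y ∈ S. If g ≠ 0, f(z₀)=0, and f and g are linearly independent over ℂ, then g(z₀) ≠ 0. -/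
theorem stmt_3 {S : Type*} [Semigroup S] (z₀ : S) (f g : S → ℂ)
    (h : ∀ x y : S, g (x * y * z₀) = g x * g y - f x * f y)
    (hg : g ≠ 0) (hf : f z₀ = 0)
    (hli : LinearIndependent ℂ ![f, g]) :
    g z₀ ≠ 0 := by
  intro hz
  -- From linear independence: any pointwise relation a*f + b*g = 0 forces a = b = 0
  have key : ∀ a b : ℂ, (∀ s : S, a * f s + b * g s = 0) → a = 0 ∧ b = 0 := by
    intro a b hab
    have := Fintype.linearIndependent_iff.mp hli ![a, b] ?_
    · exact ⟨this 0, this 1⟩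
    · funext t
      simp [Fin.sum_univ_two]
      linear_combination hab t
  -- g (w * z₀) = 0 and f (w * z₀) = 0 for all w
  have step1 : ∀ y : S, f (y * z₀) = 0 ∧ g (y * z₀) = 0 := by
    intro y
    have hrel : ∀ x : S, (-(f (y * z₀))) * f x + (g (y * z₀)) * g x = 0 := by
      intro x
      have h1 : g (x * (y * z₀) * z₀) = g x * g (y * z₀) - f x * f (y * z₀) := h x (y * z₀)
      have h2 : g ((x * y) * z₀ * z₀) = g (x * y) * g z₀ - f (x * y) * f z₀ := h (x * y) z₀
      rw [hz, hf] at h2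
      have heq : x * (y * z₀) * z₀ = (x * y) * z₀ * z₀ := by
        simp [mul_assoc]
      rw [heq, h2] at h1
      ring_nf
      ring_nf at h1
      linear_combination -h1
    obtain ⟨ha, hb⟩ := key _ _ hrel
    exact ⟨neg_eq_zero.mp ha, hb⟩
  -- hence g(x*y*z₀)=0, so g x * g y = f x * f y
  apply hg
  funext y
  have hrel : ∀ x : S, (-(f y)) * f x + (g y) * g x = 0 := by
    intro x
    have h1 := h x y
    have h0 := (step1 (x * y)).2
    
    rw [h0] at h1
    linear_combination -h1
  exact (key _ _ hrel).2
end

section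
/- Let S be a semigroup, z₀ ∈ S, and f, g : S → ℂ satisfy g(xyz₀)=g(x)g(y)−f(x)f(y) for all x,y ∈ S. If f(z₀) ≠ 0, then there exists μ ∈ ℂ such that f(xyz₀) = f(x)g(y) + f(y)g(x) + μ·f(x)f(y) for all x,y ∈ S. -/
theorem stmt_4 {S : Type*} [Semigroup S] (z₀ : S) (f g : S → ℂ)
    (h : ∀ x y : S, g (x * y * z₀) = g x * g y - f x * f y)
    (hf : f z₀ ≠ 0) :
    ∃ μ : ℂ, ∀ x y : S,
      f (x * y * z₀) = f x * g y + f y * g x + μ * (f x * f y) := by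
  have hB : ∀ x y : S, g (x*y) * g z₀ - f (x*y) * f z₀
      = g x * g (y*z₀) - f x * f (y*z₀) := by
    intro x y
    have h1 := h x (y*z₀)
    have h2 := h (x*y) z₀
    have hassoc : x*(y*z₀)*z₀ = (x*y)*z₀*z₀ := by simp [mul_assoc]
    rw [hassoc, h2] at h1
    exact h1
  have E1 : ∀ a b : S, f (a*b*z₀) * f z₀
      = g a * f b * f z₀ + f a * (f (b*z₀*z₀) - f b * g z₀) := by
    intro a b
    have h1 := hB a (b*z₀)
    have hassoc : a*(b*z₀) = a*b*z₀ := (mul_assoc a b z₀).symm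
    rw [hassoc, h a b, h b z₀] at h1
    linear_combination -h1
  refine ⟨(f (z₀*z₀*z₀) - 2 * f z₀ * g z₀) / (f z₀ * f z₀), fun x y => ?_⟩
  have E2 := E1 y z₀
  have E3 := E1 x y
  field_simp
  linear_combination f z₀ * E3 + f x * E2
end

section
/- Let S be a semigroup, z₀ ∈ S, and χ : S → ℂ a multiplicative function with χ(z₀) ≠ 0, and let d ∈ ℂ with d² ≠ 1. Then the pair f = (d·χ(z₀)/(1−d²))·χ and g = (χ(z₀)/(1−d²))·χ satisfies g(xyz₀) = g(x)g(y) − f(x)f(y) for all x,y ∈ S. -/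
theorem stmt_8 {S : Type*} [Semigroup S] (z₀ : S) (χ : S → ℂ)
    (hχ : ∀ x y : S, χ (x * y) = χ x * χ y) (hz : χ z₀ ≠ 0)
    (d : ℂ) (hd : d ^ 2 ≠ 1)
    (f g : S → ℂ)
    (hf : f = fun x => d * χ z₀ / (1 - d ^ 2) * χ x)
    (hg : g = fun x => χ z₀ / (1 - d ^ 2) * χ x) :
    ∀ x y : S, g (x * y * z₀) = g x * g y - f x * f y := by
  subst hf hg
  intro x y
  have h1 : (1 : ℂ) - d ^ 2 ≠ 0 := by
    intro h; apply hd; linear_combination -h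
  simp only [hχ]
  field_simp
end

section
/- Let S be a semigroup, z₀ ∈ S, c ∈ ℂ with c ≠ 0 and c ≠ ±i, and χ₁, χ₂ : S → ℂ multiplicative functions with χ₁(z₀) ≠ 0 and χ₂(z₀) ≠ 0. Define f = −(χ₁(z₀)χ₁ − χ₂(z₀)χ₂)/(i(c⁻¹+c)) and g = (c⁻¹χ₁(z₀)χ₁ + c·χ₂(z₀)χ₂)/(c⁻¹+c). Then g(xyz₀) = g(x)g(y) − f(x)f(y) for all x,y ∈ S. -/
theorem stmt_9 {S : Type*} [Semigroup S] (z₀ : S) (c : ℂ)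
    (hc : c ≠ 0) (hci : c ≠ Complex.I) (hci' : c ≠ -Complex.I)
    (χ₁ χ₂ : S → ℂ)
    (h₁ : ∀ x y : S, χ₁ (x * y) = χ₁ x * χ₁ y)
    (h₂ : ∀ x y : S, χ₂ (x * y) = χ₂ x * χ₂ y)
    (hz₁ : χ₁ z₀ ≠ 0) (hz₂ : χ₂ z₀ ≠ 0)
    (f g : S → ℂ)
    (hf : f = fun x => -((χ₁ z₀ * χ₁ x - χ₂ z₀ * χ₂ x) / (Complex.I * (c⁻¹ + c))))
    (hg : g = fun x => (c⁻¹ * (χ₁ z₀ * χ₁ x) + c * (χ₂ z₀ * χ₂ x)) / (c⁻¹ + c)) :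
    ∀ x y : S, g (x * y * z₀) = g x * g y - f x * f y := by
  have h1c : 1 + c ^ 2 ≠ 0 := by
    intro h
    have h2 : (c - Complex.I) * (c + Complex.I) = 0 := by
      linear_combination h - Complex.I_sq
    rcases mul_eq_zero.mp h2 with h3 | h3
    · exact hci (sub_eq_zero.mp h3)
    · exact hci' (eq_neg_of_add_eq_zero_left h3)
  have hdc : c⁻¹ + c = (1 + c ^ 2) / c := by field_simp
  intro x y
  subst hf hg
  simp only [h₁, h₂, hdc]
  have hI := Complex.I_ne_zero
  field_simp
  ring_nf
  simp only [Complex.I_sq]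
  ring
end

section
/- Let S be a semigroup, z₀ ∈ S, q, γ ∈ ℂ with q ≠ 0 and γ ≠ 0, ξ ∈ ℂ with ξ² = 1+q², and χ₁, χ₂ : S → ℂ multiplicative functions satisfying χ₁(z₀) = (q² − (1+ξ)²)/(2γq) and χ₂(z₀) = −(q² − (1−ξ)²)/(2γq). Define f = (χ₁+χ₂)/(2γ) + ξ(χ₁−χ₂)/(2γ) and g = q(χ₁−χ₂)/(2γ). Then g(xyz₀) = g(x)g(y) − f(x)f(y) for all x,y ∈ S. -/
/-!
In g(x)g(y) − f(x)f(y) the mixed terms χ₁(x)χ₂(y) + χ₂(x)χ₁(y) carry the coefficient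
ξ² − 1 − q², which vanishes, and the coefficients of χ₁(x)χ₁(y) and χ₂(x)χ₂(y) are exactly
the ones that the prescribed values χ₁(z₀), χ₂(z₀) produce in g(xyz₀).
-/

theorem mul_sub_mul_eq_of_sq_eq_one_add_sq {R : Type*} [CommRing R] {q ξ : R}
    (hξ : ξ ^ 2 = 1 + q ^ 2) (a b a' b' : R) :
    q * (a - b) * (q * (a' - b')) - ((1 + ξ) * a + (1 - ξ) * b) * ((1 + ξ) * a' + (1 - ξ) * b') =
      (q ^ 2 - (1 + ξ) ^ 2) * (a * a') + (q ^ 2 - (1 - ξ) ^ 2) * (b * b') := by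
  linear_combination (a * b' + b * a') * hξ

theorem stmt_10_general {S : Type*} [Semigroup S] (z₀ : S) (q γ ξ : ℂ)
    (hq : q ≠ 0) (hξ : ξ ^ 2 = 1 + q ^ 2)
    (χ₁ χ₂ : S → ℂ)
    (h₁ : ∀ x y : S, χ₁ (x * y) = χ₁ x * χ₁ y)
    (h₂ : ∀ x y : S, χ₂ (x * y) = χ₂ x * χ₂ y)
    (hz₁ : χ₁ z₀ = (q ^ 2 - (1 + ξ) ^ 2) / (2 * γ * q))
    (hz₂ : χ₂ z₀ = -((q ^ 2 - (1 - ξ) ^ 2) / (2 * γ * q)))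
    (f g : S → ℂ)
    (hf : f = fun x => (χ₁ x + χ₂ x) / (2 * γ) + ξ * ((χ₁ x - χ₂ x) / (2 * γ)))
    (hg : g = fun x => q * ((χ₁ x - χ₂ x) / (2 * γ))) :
    ∀ x y : S, g (x * y * z₀) = g x * g y - f x * f y := by
  intro x y
  subst hf hg
  simp only [h₁, h₂, hz₁, hz₂]
  have hq_inv : q * q⁻¹ = 1 := mul_inv_cancel₀ hq
  have key := mul_sub_mul_eq_of_sq_eq_one_add_sq hξ (χ₁ x) (χ₂ x) (χ₁ y) (χ₂ y)
  linear_combination -(2 * γ)⁻¹ ^ 2 * key + (2 * γ)⁻¹ ^ 2 * ((q ^ 2 - (1 + ξ) ^ 2) * (χ₁ x * χ₁ y)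
    + (q ^ 2 - (1 - ξ) ^ 2) * (χ₂ x * χ₂ y)) * hq_inv

theorem stmt_10 {S : Type*} [Semigroup S] (z₀ : S) (q γ ξ : ℂ)
    (hq : q ≠ 0) (hγ : γ ≠ 0) (hξ : ξ ^ 2 = 1 + q ^ 2)
    (χ₁ χ₂ : S → ℂ)
    (h₁ : ∀ x y : S, χ₁ (x * y) = χ₁ x * χ₁ y)
    (h₂ : ∀ x y : S, χ₂ (x * y) = χ₂ x * χ₂ y)
    (hz₁ : χ₁ z₀ = (q ^ 2 - (1 + ξ) ^ 2) / (2 * γ * q))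
    (hz₂ : χ₂ z₀ = -((q ^ 2 - (1 - ξ) ^ 2) / (2 * γ * q)))
    (f g : S → ℂ)
    (hf : f = fun x => (χ₁ x + χ₂ x) / (2 * γ) + ξ * ((χ₁ x - χ₂ x) / (2 * γ)))
    (hg : g = fun x => q * ((χ₁ x - χ₂ x) / (2 * γ))) :
    ∀ x y : S, g (x * y * z₀) = g x * g y - f x * f y :=
  stmt_10_general z₀ q γ ξ hq hξ χ₁ χ₂ h₁ h₂ hz₁ hz₂ f g hf hg
end

section
/- Let S be a semigroup, z₀ ∈ S, and f, g : S → ℂ satisfy g(xyz₀)=g(x)g(y)−f(x)f(y) for all x,y ∈ S. Suppose f(z₀)=0, g(z₀)=0, and g(yz₀)=0 for all y ∈ S. Then g(x)g(y) = f(x)f(y) for all x,y ∈ S, and hence f = g or f = −g. -/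
theorem stmt_13 {S : Type*} [Semigroup S] (z₀ : S) (f g : S → ℂ)
    (h : ∀ x y : S, g (x * y * z₀) = g x * g y - f x * f y)
    (hf : f z₀ = 0) (hg : g z₀ = 0) (hS : ∀ y : S, g (y * z₀) = 0) :
    (∀ x y : S, g x * g y = f x * f y) ∧ (f = g ∨ f = -g) := by
  have key : ∀ x y : S, g x * g y = f x * f y := by
    intro x y
    have := h x y
    rw [hS (x * y)] at this
    linear_combination -this
  refine ⟨key, ?_⟩
  by_cases hfz : ∀ x, f x = 0
  · left
    funext x
    have := key x x
    rw [hfz x, mul_zero] at this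
    have : g x = 0 := by
      rcases mul_eq_zero.mp this with h0 | h0 <;> exact h0
    rw [hfz x, this]
  · push_neg at hfz
    obtain ⟨a, ha⟩ := hfz
    have hga : g a ≠ 0 := by
      intro h0
      have := key a a
      rw [h0, mul_zero] at this
      rcases mul_eq_zero.mp this.symm with h1 | h1 <;> exact ha h1
    have hsq : g a * g a = f a * f a := key a a
    have hpm : f a = g a ∨ f a = -g a := by
      have : (f a - g a) * (f a + g a) = 0 := by ring_nf; linear_combination -hsq
      rcases mul_eq_zero.mp this with h1 | h1
      · left; exact sub_eq_zero.mp h1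
      · right; linear_combination h1
    rcases hpm with hpa | hpa
    · left
      funext x
      have := key x a
      have : g x * g a = f x * g a := by rw [this, hpa]
      exact (mul_right_cancel₀ hga this).symm
    · right
      funext x
      have := key x a
      simp only [Pi.neg_apply]
      have h2 : g x * g a = (-f x) * g a := by rw [this, hpa]; ring
      have h3 := mul_right_cancel₀ hga h2
      linear_combination h3
end

section
/- Let S be a semigroup, z₀ ∈ S, and f, g : S → ℂ satisfy g(xyz₀)=g(x)g(y)−f(x)f(y) for all x,y ∈ S, with f(z₀)=0 and g(z₀) ≠ 0 and g(z₀²)=0. Assume f and g are linearly independent. Then f(z₀²) ≠ 0, and setting γ := g(z₀)/f(z₀²), the pair (γf, γg) satisfies the cosine addition law: (γf)(xy) = (γf)(x)(γf)(y) − (γg)(x)(γg)(y) for all x,y ∈ S. -/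
/-!
Comparing the equation at `(x z₀, z₀)` and at `(x, z₀²)`, which share the left side
`g (x z₀³)`, gives `g (x z₀) g z₀ = -f x f (z₀²)`. If `f (z₀²) = 0` this forces
`g (x z₀) = 0` for every `x`, so `g x g z₀ = g (x z₀ z₀) = 0` and `g` vanishes, which
linear independence forbids. Otherwise the identity at `x y` expresses `f (x y)` through
`g (x y z₀) = g x g y - f x f y`, and rescaling by `γ` turns this into the cosine law.
-/

namespace KannappanCosine

variable {S R : Type*} [Semigroup S] {z₀ : S} {f g : S → R}

theorem g_mul_mul_g_eq_neg_f_mul [CommRing R] (h : ∀ x y : S, g (x * y * z₀) = g x * g y - f x * f y)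
    (hf : f z₀ = 0) (hg2 : g (z₀ * z₀) = 0) (x : S) :
    g (x * z₀) * g z₀ = -(f x * f (z₀ * z₀)) := by
  have h₁ := h (x * z₀) z₀
  have h₂ := h x (z₀ * z₀)
  rw [mul_assoc x z₀ z₀, h₂, hf, hg2] at h₁
  linear_combination -h₁

theorem g_eq_zero_of_f_mul_self_eq_zero [CommRing R] [NoZeroDivisors R]
    (h : ∀ x y : S, g (x * y * z₀) = g x * g y - f x * f y)
    (hf : f z₀ = 0) (hg : g z₀ ≠ 0) (hg2 : g (z₀ * z₀) = 0) (hF : f (z₀ * z₀) = 0) :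
    g = 0 := by
  have hmul : ∀ x, g (x * z₀) = 0 := fun x => by
    simpa [hF, hg] using g_mul_mul_g_eq_neg_f_mul h hf hg2 x
  funext x
  have hx := h x z₀
  rw [hmul, hf, mul_zero, sub_zero] at hx
  simpa [hg] using hx.symm

theorem f_mul_eq_of_f_mul_self_ne_zero [Field R]
    (h : ∀ x y : S, g (x * y * z₀) = g x * g y - f x * f y)
    (hf : f z₀ = 0) (hg2 : g (z₀ * z₀) = 0) (hF : f (z₀ * z₀) ≠ 0) (x y : S) :
    f (x * y) = g z₀ / f (z₀ * z₀) * (f x * f y - g x * g y) := by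
  have key := g_mul_mul_g_eq_neg_f_mul h hf hg2 (x * y)
  rw [h x y] at key
  field_simp
  linear_combination key

end KannappanCosine

open KannappanCosine in
theorem stmt_14 {S : Type*} [Semigroup S] (z₀ : S) (f g : S → ℂ)
    (h : ∀ x y : S, g (x * y * z₀) = g x * g y - f x * f y)
    (hf : f z₀ = 0) (hg : g z₀ ≠ 0) (hg2 : g (z₀ * z₀) = 0)
    (hli : LinearIndependent ℂ ![f, g]) :
    f (z₀ * z₀) ≠ 0 ∧ ∀ x y : S,
      (g z₀ / f (z₀ * z₀)) * f (x * y) =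
        ((g z₀ / f (z₀ * z₀)) * f x) * ((g z₀ / f (z₀ * z₀)) * f y) -
          ((g z₀ / f (z₀ * z₀)) * g x) * ((g z₀ / f (z₀ * z₀)) * g y) := by
  have hF : f (z₀ * z₀) ≠ 0 := fun hF =>
    hli.ne_zero 1 (by simpa using g_eq_zero_of_f_mul_self_eq_zero h hf hg hg2 hF)
  refine ⟨hF, fun x y => ?_⟩
  rw [f_mul_eq_of_f_mul_self_ne_zero h hf hg2 hF x y]
  ring
end

section
/- Let S be a semigroup, z₀ ∈ S, and f, g : S → ℂ satisfy g(xyz₀)=g(x)g(y)−f(x)f(y), with f(z₀)=0, g(z₀) ≠ 0, and g(z₀²) ≠ 0. Set β := g(z₀)/g(z₀²) and α := f(z₀²)/g(z₀²). Then β·g(xy) = β²g(x)g(y) − β²f(x)f(y) + αβ·f(xy) for all x,y ∈ S; equivalently the pair (βg, βf) satisfies (βg)(xy) = (βg)(x)(βg)(y) − (βf)(x)(βf)(y) + α·(βf)(xy). -/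
theorem stmt_15 {S : Type*} [Semigroup S] (z₀ : S) (f g : S → ℂ)
    (h : ∀ x y : S, g (x * y * z₀) = g x * g y - f x * f y)
    (hf : f z₀ = 0) (hg : g z₀ ≠ 0) (hg2 : g (z₀ * z₀) ≠ 0) :
    ∀ x y : S,
      (g z₀ / g (z₀ * z₀)) * g (x * y) =
        (g z₀ / g (z₀ * z₀)) ^ 2 * g x * g y -
          (g z₀ / g (z₀ * z₀)) ^ 2 * f x * f y +
          (f (z₀ * z₀) / g (z₀ * z₀)) * (g z₀ / g (z₀ * z₀)) * f (x * y) := by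
  have key : ∀ u : S, g (u * z₀) * g z₀ = g u * g (z₀ * z₀) - f u * f (z₀ * z₀) := by
    intro u
    have h1 := h (u * z₀) z₀
    have h2 := h u (z₀ * z₀)
    rw [hf, mul_zero, sub_zero] at h1
    rw [← mul_assoc u z₀ z₀] at h2
    rw [h2] at h1
    exact h1.symm
  intro x y
  have k := key (x * y)
  have hxy := h x y
  set iG := (g (z₀ * z₀))⁻¹ with hiGdef
  have hiG : g (z₀ * z₀) * iG = 1 := mul_inv_cancel₀ hg2
  simp only [div_eq_mul_inv, ← hiGdef]
  linear_combination ((g z₀)^2 * iG^2) * hxy + (-(g z₀) * iG^2) * k +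
    (-(g z₀) * iG * g (x*y)) * hiG
end

section
/- Let S be a semigroup, z₀ ∈ S, μ ∈ ℂ, and suppose f, g : S → ℂ satisfy g(xyz₀)=g(x)g(y)−f(x)f(y) and f(xyz₀)=f(x)g(y)+f(y)g(x)+μ f(x)f(y) for all x,y ∈ S. Suppose λ ∈ ℂ satisfies λ²+μλ+1=0 and there exists a multiplicative function χ : S → ℂ with χ(z₀) ≠ 0 such that g − λf = χ(z₀)·χ, and λ ∈ {1,−1}. Then f(xyz₀) = χ(z₀)f(x)χ(y) + χ(z₀)f(y)χ(x) for all x,y ∈ S. -/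
theorem stmt_16 {S : Type*} [Semigroup S] (z₀ : S) (μ lam : ℂ) (f g χ : S → ℂ)
    (hg : ∀ x y : S, g (x * y * z₀) = g x * g y - f x * f y)
    (hf : ∀ x y : S, f (x * y * z₀) = f x * g y + f y * g x + μ * (f x * f y))
    (hlam : lam ^ 2 + μ * lam + 1 = 0)
    (hχmul : ∀ x y : S, χ (x * y) = χ x * χ y) (hχz : χ z₀ ≠ 0)
    (hgl : ∀ x : S, g x - lam * f x = χ z₀ * χ x)
    (hlam1 : lam = 1 ∨ lam = -1) :
    ∀ x y : S, f (x * y * z₀) = χ z₀ * f x * χ y + χ z₀ * f y * χ x := by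
  have hμ : 2 * lam + μ = 0 := by
    rcases hlam1 with h | h <;> subst h <;> [linear_combination hlam; linear_combination -hlam]
  intro x y
  linear_combination hf x y + f x * hgl y + f y * hgl x + f x * f y * hμ
end

section
/- Let S be a semigroup, z₀ ∈ S, and f, g : S → ℂ satisfy g(xyz₀)=g(x)g(y)−f(x)f(y) for all x,y ∈ S, with f(z₀)=0 and g(z₀)=0. Then g(xyz₀²)=0 for all x,y ∈ S, and consequently g(x)g(yz₀) = f(x)f(yz₀) for all x,y ∈ S. -/
theorem stmt_18 {S : Type*} [Semigroup S] (z₀ : S) (f g : S → ℂ)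
    (h : ∀ x y : S, g (x * y * z₀) = g x * g y - f x * f y)
    (hf : f z₀ = 0) (hg : g z₀ = 0) :
    (∀ x y : S, g (x * y * z₀ * z₀) = 0) ∧
      ∀ x y : S, g x * g (y * z₀) = f x * f (y * z₀) := by
  have key : ∀ x y : S, g (x * y * z₀ * z₀) = 0 := by
    intro x y
    have := h (x * y) z₀
    simp [hf, hg] at this
    exact this
  refine ⟨key, fun x y => ?_⟩
  have h1 := h x (y * z₀)
  have h2 : x * (y * z₀) * z₀ = x * y * z₀ * z₀ := by
    simp [mul_assoc]
  rw [h2, key] at h1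
  linear_combination -h1
end
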